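/- arXiv:1606.09081 — 4 statements merged into one kernel-verified Lean document; each statement's English description precedes it below -/
import Mathlib

section
/- If A is an n×n skew-symmetric matrix (over the reals) and X is an HL-clan of A, then A and Inv(X,A) have the same characteristic polynomial. -/
open Matrix

def MInv {m : Type*} [DecidableEq m] (X : Finset m) (A : Matrix m m ℝ) : Matrix m m ℝ :=
  fun i j => if i ∈ X ∧ j ∈ X then -A i j else A i j

def oSub {m : Type*} (A : Matrix m m ℝ) (X Y : Finset m) : Matrix X Y ℝ :=
  A.submatrix (fun i => (i : m)) (fun j => (j : m))

def pSub {m : Type*} (A : Matrix m m ℝ) (X : Finset m) : Matrix X X ℝ :=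
  A.submatrix (fun i => (i : m)) (fun j => (j : m))

def IsHLClan {m : Type*} [Fintype m] [DecidableEq m] (A : Matrix m m ℝ) (X : Finset m) : Prop :=
  (oSub A X Xᶜ).rank ≤ 1 ∧ (oSub A Xᶜ X).rank ≤ 1

def HLCRE {m : Type*} [Fintype m] [DecidableEq m] (A B : Matrix m m ℝ) : Prop :=
  ∃ N : ℕ, ∃ f : ℕ → Matrix m m ℝ, f 0 = A ∧ f N = B ∧
    (∀ k ≤ N, (f k)ᵀ = -(f k)) ∧
    (∀ k < N, ∃ X : Finset m, IsHLClan (f k) X ∧ f (k + 1) = MInv X (f k))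

/-! Split the indices as `X ⊔ Xᶜ` and write `A = [[B, C], [-Cᵀ, E]]`; as `B` is skew,
`Inv(X, A) = [[Bᵀ, C], [-Cᵀ, E]]`. For `t` outside the spectrum of `E` the Schur complement gives
`det (t - A) = det (t - E) * det (t - B + C (t - E)⁻¹ Cᵀ)`, and the same with `Bᵀ` in place of `B`.
Since `C = u vᵀ` has rank at most one, `C W Cᵀ = (vᵀ W v) u uᵀ` is symmetric, so the two Schur
complements are transposes of each other and have the same determinant. -/

open Polynomial

namespace Matrix

section BlockMatrices

variable {ι κ : Type*} [Fintype κ]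

theorem exists_eq_vecMulVec_of_rank_le_one {K : Type*} [Field K] {C : Matrix ι κ K}
    (h : C.rank ≤ 1) : ∃ (u : ι → K) (v : κ → K), C = vecMulVec u v := by
  classical
  obtain ⟨w, hw⟩ := finrank_le_one_iff.mp h
  have hcol : ∀ j, Cᵀ j ∈ LinearMap.range C.mulVecLin := fun j =>
    ⟨Pi.single j 1, by rw [mulVecLin_apply, mulVec_single_one]; rfl⟩
  choose v hv using fun j => hw ⟨Cᵀ j, hcol j⟩
  refine ⟨w, v, ext fun i j => ?_⟩
  have := congr_arg (fun x : LinearMap.range C.mulVecLin => (x : ι → K) i) (hv j)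
  simpa [vecMulVec_apply, mul_comm] using this.symm

theorem isSymm_mul_mul_transpose_of_rank_le_one {K : Type*} [Field K] {C : Matrix ι κ K}
    (h : C.rank ≤ 1) (W : Matrix κ κ K) : (C * W * Cᵀ).IsSymm := by
  obtain ⟨u, v, rfl⟩ := exists_eq_vecMulVec_of_rank_le_one h
  rw [transpose_vecMulVec, vecMulVec_mul, vecMulVec_mul_vecMulVec]
  exact IsSymm.ext fun i j => by simp only [vecMulVec_apply, Pi.smul_apply, smul_eq_mul]; ring

variable [Fintype ι] [DecidableEq ι] [DecidableEq κ]

theorem det_fromBlocks_transpose₁₁ {R : Type*} [CommRing R] (P : Matrix ι ι R)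
    (C : Matrix ι κ R) (D : Matrix κ ι R) (Q : Matrix κ κ R) [Invertible Q]
    (h : (C * ⅟Q * D).IsSymm) :
    (fromBlocks Pᵀ C D Q).det = (fromBlocks P C D Q).det := by
  rw [det_fromBlocks₂₂, det_fromBlocks₂₂, ← det_transpose (P - _), transpose_sub, h.eq]

theorem charpoly_fromBlocks_transpose₁₁ {K : Type*} [Field K] [Infinite K] (B : Matrix ι ι K)
    (C : Matrix ι κ K) (D : Matrix κ ι K) (E : Matrix κ κ K)
    (h : ∀ W : Matrix κ κ K, (C * W * D).IsSymm) :
    (fromBlocks Bᵀ C D E).charpoly = (fromBlocks B C D E).charpoly := by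
  apply eq_of_infinite_eval_eq
  refine (finite_setOfPred_isRoot (charpoly_monic E).ne_zero).infinite_compl.mono fun t ht => ?_
  have hE : IsUnit (scalar κ t - E).det := by
    simpa [eval_charpoly, isUnit_iff_ne_zero] using ht
  have : Invertible (scalar κ t - E) := invertibleOfIsUnitDet _ hE
  have hblock : ∀ M : Matrix ι ι K, scalar (ι ⊕ κ) t - fromBlocks M C D E =
      fromBlocks (scalar ι t - M) (-C) (-D) (scalar κ t - E) := fun M => by
    ext (i | i) (j | j) <;> simp [diagonal_apply]
  have hB : scalar ι t - Bᵀ = (scalar ι t - B)ᵀ := by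
    rw [transpose_sub, scalar_apply, diagonal_transpose]
  rw [Set.mem_ofPred_eq, eval_charpoly, eval_charpoly, hblock, hblock, hB]
  have hsymm : (-C * ⅟(scalar κ t - E) * -D).IsSymm := by
    simpa only [Matrix.neg_mul, Matrix.mul_neg, neg_neg] using h (⅟(scalar κ t - E))
  exact det_fromBlocks_transpose₁₁ _ _ _ _ hsymm

end BlockMatrices

end Matrix

section Clan

variable {m : Type*}

theorem pSub_transpose (A : Matrix m m ℝ) (X : Finset m) : (pSub A X)ᵀ = pSub Aᵀ X := rfl

theorem oSub_transpose (A : Matrix m m ℝ) (X Y : Finset m) : (oSub A X Y)ᵀ = oSub Aᵀ Y X := rfl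

theorem pSub_neg (A : Matrix m m ℝ) (X : Finset m) : pSub (-A) X = -pSub A X := rfl

theorem oSub_neg (A : Matrix m m ℝ) (X Y : Finset m) : oSub (-A) X Y = -oSub A X Y := rfl

variable [DecidableEq m]

theorem pSub_MInv (A : Matrix m m ℝ) (X : Finset m) : pSub (MInv X A) X = -pSub A X := by
  ext i j
  simp [pSub, MInv]

variable [Fintype m]

theorem oSub_MInv_compl (A : Matrix m m ℝ) (X : Finset m) :
    oSub (MInv X A) X Xᶜ = oSub A X Xᶜ := by
  ext i j
  simp [oSub, MInv, Finset.mem_compl.mp j.2]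

theorem oSub_compl_MInv (A : Matrix m m ℝ) (X : Finset m) :
    oSub (MInv X A) Xᶜ X = oSub A Xᶜ X := by
  ext i j
  simp [oSub, MInv, Finset.mem_compl.mp i.2]

theorem pSub_compl_MInv (A : Matrix m m ℝ) (X : Finset m) : pSub (MInv X A) Xᶜ = pSub A Xᶜ := by
  ext i j
  simp [pSub, MInv, Finset.mem_compl.mp i.2]

def Finset.sumComplEquiv (X : Finset m) : X ⊕ (Xᶜ : Finset m) ≃ m :=
  (Equiv.sumCongr (Equiv.refl X) (Equiv.subtypeEquivRight fun _ => Finset.mem_compl)).trans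
    (Equiv.sumCompl (· ∈ X))

theorem submatrix_sumComplEquiv (A : Matrix m m ℝ) (X : Finset m) :
    A.submatrix X.sumComplEquiv X.sumComplEquiv =
      fromBlocks (pSub A X) (oSub A X Xᶜ) (oSub A Xᶜ X) (pSub A Xᶜ) := by
  ext (i | i) (j | j) <;> rfl

theorem charpoly_eq_charpoly_fromBlocks (A : Matrix m m ℝ) (X : Finset m) :
    A.charpoly = (fromBlocks (pSub A X) (oSub A X Xᶜ) (oSub A Xᶜ X) (pSub A Xᶜ)).charpoly := by
  rw [← submatrix_sumComplEquiv, ← charpoly_reindex X.sumComplEquiv.symm]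
  rfl

end Clan

theorem stmt_5 {n : ℕ} (A : Matrix (Fin n) (Fin n) ℝ) (hA : Aᵀ = -A)
    (X : Finset (Fin n)) (hX : IsHLClan A X) :
    (MInv X A).charpoly = A.charpoly := by
  have hB : (pSub A X)ᵀ = -pSub A X := by rw [pSub_transpose, hA, pSub_neg]
  have hD : oSub A Xᶜ X = -(oSub A X Xᶜ)ᵀ := by rw [oSub_transpose, hA, oSub_neg, neg_neg]
  rw [charpoly_eq_charpoly_fromBlocks _ X, charpoly_eq_charpoly_fromBlocks A X, pSub_MInv,
    oSub_MInv_compl, oSub_compl_MInv, pSub_compl_MInv, ← hB]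
  refine charpoly_fromBlocks_transpose₁₁ _ _ _ _ fun W => ?_
  rw [hD, Matrix.mul_neg]
  exact (isSymm_mul_mul_transpose_of_rank_le_one hX.1 W).neg
end

section
/- If A and B are n×n skew-symmetric matrices that are diagonally similar, i.e., B = D⁻¹AD for some nonsingular diagonal matrix D, then b_ij = ±a_ij for all i,j, and D may be replaced by a {-1,1}-diagonal matrix D' with B = D'⁻¹AD'. -/
open Matrix

/-!
Entrywise, `B = D⁻¹AD` reads `b_ij = d_i⁻¹ a_ij d_j`. Skew-symmetry of both `A` and `B` forces
`d_i² = d_j²`, i.e. `|d_i| = |d_j|`, whenever `a_ij ≠ 0`. So writing `d = |d| · sign d`, the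
factor `|d|` is constant along every nonzero entry and cancels, leaving `B = S⁻¹AS` with the
`±1`-diagonal `S = diag (sign d)`; in particular `b_ij = ±a_ij`.
-/

namespace Matrix

variable {m K : Type*} [Fintype m] [DecidableEq m] [Field K]

theorem diagonal_inv_mul_mul_diagonal_apply (A : Matrix m m K) {d : m → K} (hd : ∀ i, d i ≠ 0)
    (i j : m) : ((diagonal d)⁻¹ * A * diagonal d) i j = (d i)⁻¹ * A i j * d j := by
  have hinv : (diagonal d)⁻¹ = diagonal d⁻¹ :=
    inv_eq_left_inv (by simp [diagonal_mul_diagonal, hd])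
  rw [hinv, mul_diagonal, diagonal_mul, Pi.inv_apply]

theorem diagonal_inv_mul_mul_diagonal_mul_eq (A : Matrix m m K) {c e : m → K}
    (hc : ∀ i, c i ≠ 0) (he : ∀ i, e i ≠ 0) (hconst : ∀ i j, A i j ≠ 0 → c i = c j) :
    (diagonal (c * e))⁻¹ * A * diagonal (c * e) = (diagonal e)⁻¹ * A * diagonal e := by
  ext i j
  rw [diagonal_inv_mul_mul_diagonal_apply A (d := c * e) fun i => mul_ne_zero (hc i) (he i),
    diagonal_inv_mul_mul_diagonal_apply A he]
  by_cases hA : A i j = 0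
  · simp [hA]
  · simp only [Pi.mul_apply, hconst i j hA]
    field_simp [hc j]

theorem sq_eq_sq_of_transpose_eq_neg_of_diagonal_conj {A B : Matrix m m K} (hA : Aᵀ = -A)
    (hB : Bᵀ = -B) {d : m → K} (hd : ∀ i, d i ≠ 0) (h : B = (diagonal d)⁻¹ * A * diagonal d)
    {i j : m} (hij : A i j ≠ 0) : d i ^ 2 = d j ^ 2 := by
  have hBji : B j i = -B i j := congrFun (congrFun hB i) j
  have hAji : A j i = -A i j := congrFun (congrFun hA i) j
  rw [h, diagonal_inv_mul_mul_diagonal_apply A hd, diagonal_inv_mul_mul_diagonal_apply A hd,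
    hAji] at hBji
  field_simp [hd i, hd j, hij] at hBji
  exact neg_inj.mp hBji

end Matrix

theorem stmt_10 {n : ℕ} (A B : Matrix (Fin n) (Fin n) ℝ) (hA : Aᵀ = -A) (hB : Bᵀ = -B)
    (d : Fin n → ℝ) (hd : ∀ i, d i ≠ 0)
    (h : B = (Matrix.diagonal d)⁻¹ * A * Matrix.diagonal d) :
    (∀ i j, B i j = A i j ∨ B i j = -A i j) ∧
      ∃ d' : Fin n → ℝ, (∀ i, d' i = 1 ∨ d' i = -1) ∧
        B = (Matrix.diagonal d')⁻¹ * A * Matrix.diagonal d' := by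
  set s : Fin n → ℝ := fun i => (SignType.sign (d i) : ℝ)
  have hsign : ∀ i, s i = 1 ∨ s i = -1 := fun i =>
    (hd i).lt_or_gt.symm.imp (fun hpos => by simp [s, sign_pos hpos])
      (fun hneg => by simp [s, sign_neg hneg])
  have hs_ne : ∀ i, s i ≠ 0 := fun i => by rcases hsign i with hi | hi <;> simp [hi]
  have hs : B = (diagonal s)⁻¹ * A * diagonal s := by
    have hdecomp : d = (fun i => |d i|) * s := funext fun i => (abs_mul_sign (d i)).symm
    rw [h, hdecomp]
    refine diagonal_inv_mul_mul_diagonal_mul_eq A (fun i => abs_ne_zero.mpr (hd i)) hs_ne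
      fun i j hij => (sq_eq_sq_iff_abs_eq_abs _ _).mp ?_
    exact sq_eq_sq_of_transpose_eq_neg_of_diagonal_conj hA hB hd h hij
  refine ⟨fun i j => ?_, s, hsign, hs⟩
  rw [hs, diagonal_inv_mul_mul_diagonal_apply A hs_ne]
  rcases hsign i with hi | hi <;> rcases hsign j with hj | hj <;> simp [hi, hj]
end

section
/- If A and B are n×n skew-symmetric matrices that are diagonally similar up to transposition, then they are HL-clan-reversal-equivalent. -/
/-! Skewness forces `d i ^ 2 = d j ^ 2` whenever `A i j ≠ 0`, so `D⁻¹ A D` only depends on the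
signs of the `d i`: it is `S A S` with `S` the diagonal sign matrix. Conjugating by the sign flip
of a single index `i` is the composition of the reversals of the clans `univ`, `{i}ᶜ` and `{i}`,
and the transposed case is one more reversal of `univ`, since `Bᵀ = -B`. -/

open Matrix

section SignConj

variable {m : Type*} [DecidableEq m]

def signConj (X : Finset m) (A : Matrix m m ℝ) : Matrix m m ℝ :=
  fun i j => (if i ∈ X then -1 else 1) * (if j ∈ X then -1 else 1) * A i j

theorem transpose_MInv {A : Matrix m m ℝ} (hA : Aᵀ = -A) (X : Finset m) :
    (MInv X A)ᵀ = -MInv X A := by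
  ext i j
  have hji : A j i = -A i j := by simpa using congrFun (congrFun hA i) j
  by_cases hi : i ∈ X <;> by_cases hj : j ∈ X <;> simp [MInv, hi, hj, hji]

theorem transpose_signConj {A : Matrix m m ℝ} (hA : Aᵀ = -A) (X : Finset m) :
    (signConj X A)ᵀ = -signConj X A := by
  ext i j
  have hji : A j i = -A i j := by simpa using congrFun (congrFun hA i) j
  show signConj X A j i = -signConj X A i j
  simp only [signConj, hji]
  ring

theorem signConj_empty (A : Matrix m m ℝ) : signConj ∅ A = A := by
  ext i j
  simp [signConj]

theorem signConj_insert {A : Matrix m m ℝ} {X : Finset m} {i : m} (hi : i ∉ X) :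
    signConj (insert i X) A = signConj X (signConj {i} A) := by
  ext j k
  simp only [signConj, Finset.mem_insert, Finset.mem_singleton]
  split_ifs <;> simp_all

theorem signConj_singleton [Fintype m] (A : Matrix m m ℝ) (i : m) :
    signConj {i} A = MInv {i} (MInv {i}ᶜ (MInv Finset.univ A)) := by
  ext j k
  by_cases hj : j = i <;> by_cases hk : k = i <;> simp [signConj, MInv, hj, hk]

theorem MInv_univ [Fintype m] (A : Matrix m m ℝ) : MInv Finset.univ A = -A := by
  ext i j
  simp [MInv]

end SignConj

theorem signConj_of_eq_diagonal_conj {m : Type*} [Fintype m] [DecidableEq m]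
    {A B : Matrix m m ℝ} (hA : Aᵀ = -A) (hB : Bᵀ = -B) {d : m → ℝ} (hd : ∀ i, d i ≠ 0)
    (h : B = (diagonal d)⁻¹ * A * diagonal d) :
    B = signConj {i | d i < 0} A := by
  have hinv : (diagonal d)⁻¹ = diagonal fun i => (d i)⁻¹ := by
    refine inv_eq_left_inv ?_
    rw [diagonal_mul_diagonal, ← diagonal_one]
    exact congrArg diagonal (funext fun i => inv_mul_cancel₀ (hd i))
  have hentry : ∀ i j, d i * B i j = A i j * d j := fun i j => by
    rw [h, hinv, mul_diagonal, diagonal_mul]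
    field_simp [hd i]
  ext i j
  have hentry' : d j * B i j = A i j * d i := by
    have hAji : A j i = -A i j := by simpa using congrFun (congrFun hA i) j
    have hBji : B j i = -B i j := by simpa using congrFun (congrFun hB i) j
    have := hentry j i
    rw [hAji, hBji] at this
    linarith
  have hsum : (B i j - A i j) * (d i + d j) = 0 := by linear_combination hentry i j + hentry'
  have hdiff : (B i j + A i j) * (d i - d j) = 0 := by linear_combination hentry i j - hentry'
  -- `d i + d j ≠ 0` when the signs agree and `d i - d j ≠ 0` when they differ
  simp only [signConj, Finset.mem_filter, Finset.mem_univ, true_and]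
  rcases (hd i).lt_or_gt with hi | hi <;> rcases (hd j).lt_or_gt with hj | hj <;>
    simp only [hi, hj, not_lt_of_gt, if_true, if_false] <;> norm_num
  · linarith [(mul_eq_zero.mp hsum).resolve_right (by linarith)]
  · linarith [(mul_eq_zero.mp hdiff).resolve_right (by linarith)]
  · linarith [(mul_eq_zero.mp hdiff).resolve_right (by linarith)]
  · linarith [(mul_eq_zero.mp hsum).resolve_right (by linarith)]

section HLCRE

variable {m : Type*} [Fintype m] [DecidableEq m]

theorem isHLClan_of_card_le_one (A : Matrix m m ℝ) {X : Finset m}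
    (hX : X.card ≤ 1 ∨ Xᶜ.card ≤ 1) : IsHLClan A X := by
  rcases hX with hX | hX
  · exact ⟨(rank_le_card_height _).trans (by simpa using hX),
      (rank_le_card_width _).trans (by simpa using hX)⟩
  · exact ⟨(rank_le_card_width _).trans (by rwa [Fintype.card_coe]),
      (rank_le_card_height _).trans (by rwa [Fintype.card_coe])⟩

theorem HLCRE.refl {A : Matrix m m ℝ} (hA : Aᵀ = -A) : HLCRE A A :=
  ⟨0, fun _ => A, rfl, rfl, fun _ _ => hA, fun _ hk => absurd hk (Nat.not_lt_zero _)⟩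

theorem HLCRE.cons {A B : Matrix m m ℝ} (hA : Aᵀ = -A) {X : Finset m} (hX : IsHLClan A X)
    (h : HLCRE (MInv X A) B) : HLCRE A B := by
  obtain ⟨N, f, hf0, hfN, hskew, hstep⟩ := h
  refine ⟨N + 1, fun | 0 => A | k + 1 => f k, rfl, hfN, ?_, ?_⟩
  · rintro (_ | k) hk
    exacts [hA, hskew k (by omega)]
  · rintro (_ | k) hk
    exacts [⟨X, hX, hf0⟩, hstep k (by omega)]

theorem HLCRE.of_signConj_singleton {A B : Matrix m m ℝ} (hA : Aᵀ = -A) (i : m)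
    (h : HLCRE (signConj {i} A) B) : HLCRE A B := by
  rw [signConj_singleton] at h
  have hA₁ := transpose_MInv hA Finset.univ
  have hA₂ := transpose_MInv hA₁ {i}ᶜ
  refine .cons hA (isHLClan_of_card_le_one A (by simp)) <|
    .cons hA₁ (isHLClan_of_card_le_one _ (by simp)) <|
    .cons hA₂ (isHLClan_of_card_le_one _ (by simp)) h

theorem hlcre_signConj {A : Matrix m m ℝ} (hA : Aᵀ = -A) (X : Finset m) :
    HLCRE A (signConj X A) := by
  induction X using Finset.induction_on generalizing A with
  | empty => simpa only [signConj_empty] using HLCRE.refl hA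
  | insert i X hi ih =>
    rw [signConj_insert hi]
    exact .of_signConj_singleton hA i (ih (transpose_signConj hA {i}))

theorem hlcre_diagonal_conj {A B : Matrix m m ℝ} (hA : Aᵀ = -A) (hB : Bᵀ = -B)
    {d : m → ℝ} (hd : ∀ i, d i ≠ 0) (h : B = (diagonal d)⁻¹ * A * diagonal d) :
    HLCRE A B := by
  rw [signConj_of_eq_diagonal_conj hA hB hd h]
  exact hlcre_signConj hA _

end HLCRE

theorem stmt_13 {n : ℕ} (A B : Matrix (Fin n) (Fin n) ℝ) (hA : Aᵀ = -A) (hB : Bᵀ = -B)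
    (d : Fin n → ℝ) (hd : ∀ i, d i ≠ 0)
    (h : B = (Matrix.diagonal d)⁻¹ * A * Matrix.diagonal d ∨
         Bᵀ = (Matrix.diagonal d)⁻¹ * A * Matrix.diagonal d) :
    HLCRE A B := by
  rcases h with h | h
  · exact hlcre_diagonal_conj hA hB hd h
  · have hnegA : (-A)ᵀ = -(-A) := by rw [transpose_neg, hA]
    have hB' : B = (diagonal d)⁻¹ * -A * diagonal d := by
      rw [← neg_neg B, ← hB, h, Matrix.mul_neg, Matrix.neg_mul]
    refine .cons hA (isHLClan_of_card_le_one A (X := Finset.univ) (by simp)) ?_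
    rw [MInv_univ]
    exact hlcre_diagonal_conj hnegA hB hd hB'
end

section
/- Let G be a graph on four vertices i,j,k,l with i adjacent to j,k,l, and let G^σ, G^τ be two orientations of G with all arcs at i directed away from i in both. If det(S(G^σ)) = det(S(G^τ)), then the induced oriented subgraphs G^σ[{j,k,l}] and G^τ[{j,k,l}] are hemimorphic (isomorphic or one isomorphic to the converse of the other). -/
/-!
Since every arc at `0` leaves `0`, the skew matrix of `G^σ` has first row `(0, 1, 1, 1)`, and its
determinant is the square of its Pfaffian `s₁₂ - s₁₃ + s₂₃`, an invariant of the orientation on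
`{1, 2, 3}` alone. Equal determinants thus give Pfaffians equal up to sign. For a fixed graph on
three vertices this number separates the hemimorphism classes of its orientations (`|Pf| = 3` for
the cyclic triangle and `1` for the transitive one, `2` for a directed path of length two and `0`
for the out- and in-stars), which is a finite check.
-/

open Matrix

def SkewAdj {n : ℕ} (Γ : Fin n → Fin n → Bool) : Matrix (Fin n) (Fin n) ℝ :=
  fun i j => if Γ i j then 1 else if Γ j i then -1 else 0

def IsOrientation {n : ℕ} (G : SimpleGraph (Fin n)) (Γ : Fin n → Fin n → Bool) : Prop :=
  (∀ i j, G.Adj i j ↔ (Γ i j = true ∨ Γ j i = true)) ∧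
  ∀ i j, Γ i j = true → Γ j i = false

def IsClan {n : ℕ} (Γ : Fin n → Fin n → Bool) (X : Finset (Fin n)) : Prop :=
  ∀ a ∈ X, ∀ b ∈ X, ∀ x ∉ X,
    (Γ a x = Γ b x) ∧ (Γ x a = Γ x b)

theorem det_fin_four_eq_sq {R : Type*} [CommRing R] (A : Matrix (Fin 4) (Fin 4) R)
    (hskew : ∀ i j, A j i = -A i j) (hdiag : ∀ i, A i i = 0) :
    A.det = (A 0 1 * A 2 3 - A 0 2 * A 1 3 + A 0 3 * A 1 2) ^ 2 := by
  rw [det_succ_row_zero]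
  simp [Fin.sum_univ_succ, det_fin_three, Fin.succAbove, hdiag, hskew 0 1, hskew 0 2, hskew 0 3,
    hskew 1 2, hskew 1 3, hskew 2 3]
  ring

def skewAdjInt {n : ℕ} (Γ : Fin n → Fin n → Bool) : Matrix (Fin n) (Fin n) ℤ :=
  fun i j => if Γ i j then 1 else if Γ j i then -1 else 0

theorem skewAdjInt_map_cast {n : ℕ} (Γ : Fin n → Fin n → Bool) :
    (skewAdjInt Γ).map (Int.cast : ℤ → ℝ) = SkewAdj Γ := by
  ext i j
  simp only [map_apply, skewAdjInt, SkewAdj]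
  split_ifs <;> norm_num

theorem det_skewAdj {n : ℕ} (Γ : Fin n → Fin n → Bool) :
    (SkewAdj Γ).det = (skewAdjInt Γ).det := by
  rw [← skewAdjInt_map_cast, Int.cast_det]

section Antisymm

variable {n : ℕ} {Γ : Fin n → Fin n → Bool} (hΓ : ∀ i j, Γ i j = true → Γ j i = false)
include hΓ

theorem apply_self_eq_false_of_antisymm (i : Fin n) : Γ i i = false := by
  by_contra h
  simpa [h] using hΓ i i

theorem skewAdjInt_swap (i j : Fin n) : skewAdjInt Γ j i = -skewAdjInt Γ i j := by
  unfold skewAdjInt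
  cases h : Γ i j <;> cases h' : Γ j i
  · rfl
  · simp
  · simp
  · simp [hΓ i j h] at h'

theorem skewAdjInt_self (i : Fin n) : skewAdjInt Γ i i = 0 := by
  simp [skewAdjInt, apply_self_eq_false_of_antisymm hΓ i]

end Antisymm

theorem IsOrientation.or_swap_eq {n : ℕ} {G : SimpleGraph (Fin n)} {σ τ : Fin n → Fin n → Bool}
    (hσ : IsOrientation G σ) (hτ : IsOrientation G τ) (i j : Fin n) :
    (σ i j || σ j i) = (τ i j || τ j i) := by
  rw [Bool.eq_iff_iff]
  simp [← hσ.1, ← hτ.1]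

def Hemimorphic {n : ℕ} (s t : Fin n → Fin n → Bool) : Prop :=
  (∃ e : Equiv.Perm (Fin n), ∀ a b, s a b = t (e a) (e b)) ∨
  (∃ e : Equiv.Perm (Fin n), ∀ a b, s a b = t (e b) (e a))

instance {n : ℕ} (s t : Fin n → Fin n → Bool) : Decidable (Hemimorphic s t) := by
  unfold Hemimorphic; infer_instance

/-- The Pfaffian of the skew matrix of the orientation of the cone over `s` whose apex is a
source. -/
def conePfaffian (s : Fin 3 → Fin 3 → Bool) : ℤ :=
  skewAdjInt s 0 1 - skewAdjInt s 0 2 + skewAdjInt s 1 2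

theorem det_skewAdjInt_eq_conePfaffian_sq {Γ : Fin 4 → Fin 4 → Bool}
    (hΓ : ∀ i j, Γ i j = true → Γ j i = false) (h0 : ∀ v : Fin 4, v ≠ 0 → Γ 0 v = true) :
    (skewAdjInt Γ).det = conePfaffian (fun a b => Γ a.succ b.succ) ^ 2 := by
  have hsource : ∀ v : Fin 4, v ≠ 0 → skewAdjInt Γ 0 v = 1 := fun v hv => by
    simp [skewAdjInt, h0 v hv]
  rw [det_fin_four_eq_sq _ (skewAdjInt_swap hΓ) (skewAdjInt_self hΓ),
    hsource 1 (by decide), hsource 2 (by decide), hsource 3 (by decide)]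
  change _ = (skewAdjInt Γ 1 2 - skewAdjInt Γ 1 3 + skewAdjInt Γ 2 3) ^ 2
  ring

-- Six Booleans instead of a function, so that `decide` below enumerates `Bool`s only.
def ofArcs (x y z u v w : Bool) : Fin 3 → Fin 3 → Bool :=
  ![![false, x, y], ![u, false, z], ![v, w, false]]

theorem eq_ofArcs {s : Fin 3 → Fin 3 → Bool} (hs : ∀ i, s i i = false) :
    s = ofArcs (s 0 1) (s 0 2) (s 1 2) (s 1 0) (s 2 0) (s 2 1) := by
  funext a b
  fin_cases a <;> fin_cases b <;> simp [ofArcs, hs]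

theorem hemimorphic_ofArcs : ∀ x y z u v w x' y' z' u' v' w' : Bool,
    (∀ a b, ofArcs x y z u v w a b = true → ofArcs x y z u v w b a = false) →
    (∀ a b, ofArcs x' y' z' u' v' w' a b = true → ofArcs x' y' z' u' v' w' b a = false) →
    (∀ a b, (ofArcs x y z u v w a b || ofArcs x y z u v w b a)
      = (ofArcs x' y' z' u' v' w' a b || ofArcs x' y' z' u' v' w' b a)) →
    (conePfaffian (ofArcs x y z u v w) = conePfaffian (ofArcs x' y' z' u' v' w') ∨
     conePfaffian (ofArcs x y z u v w) = -conePfaffian (ofArcs x' y' z' u' v' w')) →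
    Hemimorphic (ofArcs x y z u v w) (ofArcs x' y' z' u' v' w') := by
  decide

theorem hemimorphic_of_conePfaffian {s t : Fin 3 → Fin 3 → Bool}
    (hs : ∀ i j, s i j = true → s j i = false) (ht : ∀ i j, t i j = true → t j i = false)
    (hst : ∀ i j, (s i j || s j i) = (t i j || t j i))
    (hpf : conePfaffian s = conePfaffian t ∨ conePfaffian s = -conePfaffian t) :
    Hemimorphic s t := by
  have key := hemimorphic_ofArcs (s 0 1) (s 0 2) (s 1 2) (s 1 0) (s 2 0) (s 2 1)
    (t 0 1) (t 0 2) (t 1 2) (t 1 0) (t 2 0) (t 2 1)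
  rw [← eq_ofArcs (apply_self_eq_false_of_antisymm hs),
    ← eq_ofArcs (apply_self_eq_false_of_antisymm ht)] at key
  exact key hs ht hst hpf

theorem stmt_18_general (G : SimpleGraph (Fin 4)) (σ τ : Fin 4 → Fin 4 → Bool)
    (hσ : IsOrientation G σ) (hτ : IsOrientation G τ)
    (hσ0 : ∀ v : Fin 4, v ≠ 0 → σ 0 v = true)
    (hτ0 : ∀ v : Fin 4, v ≠ 0 → τ 0 v = true)
    (hdet : (SkewAdj σ).det = (SkewAdj τ).det) :
    (∃ e : Equiv.Perm (Fin 3), ∀ a b : Fin 3, σ a.succ b.succ = τ (e a).succ (e b).succ) ∨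
    (∃ e : Equiv.Perm (Fin 3), ∀ a b : Fin 3, σ a.succ b.succ = τ (e b).succ (e a).succ) := by
  rw [det_skewAdj, det_skewAdj, Int.cast_inj, det_skewAdjInt_eq_conePfaffian_sq hσ.2 hσ0,
    det_skewAdjInt_eq_conePfaffian_sq hτ.2 hτ0] at hdet
  exact hemimorphic_of_conePfaffian (fun _ _ => hσ.2 _ _) (fun _ _ => hτ.2 _ _)
    (fun _ _ => hσ.or_swap_eq hτ _ _) (sq_eq_sq_iff_eq_or_eq_neg.mp hdet)

theorem stmt_18 (G : SimpleGraph (Fin 4)) (σ τ : Fin 4 → Fin 4 → Bool)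
    (hσ : IsOrientation G σ) (hτ : IsOrientation G τ)
    (hadj : ∀ v : Fin 4, v ≠ 0 → G.Adj 0 v)
    (hσ0 : ∀ v : Fin 4, v ≠ 0 → σ 0 v = true)
    (hτ0 : ∀ v : Fin 4, v ≠ 0 → τ 0 v = true)
    (hdet : (SkewAdj σ).det = (SkewAdj τ).det) :
    (∃ e : Equiv.Perm (Fin 3), ∀ a b : Fin 3, σ a.succ b.succ = τ (e a).succ (e b).succ) ∨
    (∃ e : Equiv.Perm (Fin 3), ∀ a b : Fin 3, σ a.succ b.succ = τ (e b).succ (e a).succ) :=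
  stmt_18_general G σ τ hσ hτ hσ0 hτ0 hdet
end
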